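/- arXiv:1104.1389 — 6 statements merged into one kernel-verified Lean document; each statement's English description precedes it below -/
import Mathlib

section
/- The reachability Gramian, given by the integral 𝒢 = (1/2π) ∫₀^{2π} (I − e^{iθ}A)⁻¹ B B* ((I − e^{iθ}A)⁻¹)* dθ, satisfies the discrete-time Lyapunov equation 𝒢 = A 𝒢 A* + B B*. -/
/-!
Along the unit circle `m(θ) = (1 - e^{iθ} a)⁻¹` satisfies `m = 1 + a (e^{iθ} m)`, so expanding
`m c m*` gives `c + a n c + c n* a* + a (m c m*) a*` with `n = e^{iθ} m`. The function
`z ↦ (1 - z a)⁻¹` is holomorphic on a neighbourhood of the closed unit disc because the spectrum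
of `a` lies in the open disc, so by Cauchy's theorem `∫ n dθ = ∮ (1 - z a)⁻¹ dz / i = 0`; the two
cross terms therefore integrate to zero and averaging over the circle leaves the Lyapunov equation.
-/

open Matrix

theorem isUnit_one_sub_smul_of_spectrum_subset_ball {𝔸 : Type*} [Ring 𝔸] [Algebra ℂ 𝔸] {a : 𝔸}
    (ha : ∀ μ ∈ spectrum ℂ a, ‖μ‖ < 1) {z : ℂ} (hz : ‖z‖ ≤ 1) : IsUnit (1 - z • a) := by
  rcases eq_or_ne z 0 with rfl | hz0
  · simp
  have hinv : z⁻¹ ∉ spectrum ℂ a := fun h => by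
    have := ha _ h
    rw [norm_inv] at this
    exact (one_le_inv₀ (norm_pos_iff.mpr hz0)).2 hz |>.not_gt this
  have hsmul : 1 - z • a = Units.mk0 z hz0 • (algebraMap ℂ 𝔸 z⁻¹ - a) := by
    rw [Units.smul_def, Units.val_mk0, smul_sub, Algebra.algebraMap_eq_smul_one, smul_smul,
      mul_inv_cancel₀ hz0, one_smul]
  rw [hsmul, isUnit_smul_iff]
  exact spectrum.notMem_iff.mp hinv

theorem ringInverse_one_sub_smul_eq_one_add {R : Type*} [Ring R] [Algebra ℂ R] {a : R} {z : ℂ}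
    (h : IsUnit (1 - z • a)) :
    Ring.inverse (1 - z • a) = 1 + a * (z • Ring.inverse (1 - z • a)) := by
  have := Ring.mul_inverse_cancel _ h
  rwa [sub_mul, one_mul, smul_mul_assoc, ← mul_smul_comm, sub_eq_iff_eq_add] at this

theorem mul_mul_star_eq_of_eq_one_add_mul {R : Type*} [Ring R] [StarRing R] {a m n c : R}
    (hm : m = 1 + a * n) (hn : n * c * star n = m * c * star m) :
    m * c * star m = c + a * n * c + c * star n * star a + a * (m * c * star m) * star a := by
  conv_lhs => rw [hm]
  rw [← hn]
  simp only [star_add, star_one, star_mul, add_mul, mul_add, one_mul, mul_one, mul_assoc]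
  abel

theorem smul_mul_mul_star_smul_of_norm_eq_one {R : Type*} [Ring R] [StarRing R] [Algebra ℂ R]
    [StarModule ℂ R] {e : ℂ} (he : ‖e‖ = 1) (m c : R) :
    e • m * c * star (e • m) = m * c * star m := by
  have : starRingEnd ℂ e * e = 1 := by
    rw [Complex.conj_mul', he, Complex.ofReal_one, one_pow]
  simp only [star_smul, smul_mul_assoc, mul_smul_comm, smul_smul, RCLike.star_def, this, one_smul]

namespace intervalIntegral

variable {s t : ℝ}

theorem integral_const_mul_mul_const {R : Type*} [NonUnitalNormedRing R] [NormedSpace ℝ R]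
    [IsScalarTower ℝ R R] [SMulCommClass ℝ R R] [CompleteSpace R] {f : ℝ → R}
    (hf : IntervalIntegrable f MeasureTheory.volume s t) (x y : R) :
    ∫ θ in s..t, x * f θ * y = x * (∫ θ in s..t, f θ) * y :=
  (ContinuousLinearMap.mulLeftRight ℝ R x y).intervalIntegral_comp_comm hf

theorem integral_star {E : Type*} [NormedAddCommGroup E] [NormedSpace ℝ E] [CompleteSpace E]
    [StarAddMonoid E] [StarModule ℝ E] [ContinuousStar E] {f : ℝ → E}
    (hf : IntervalIntegrable f MeasureTheory.volume s t) :
    ∫ θ in s..t, star (f θ) = star (∫ θ in s..t, f θ) :=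
  (starL' ℝ : E ≃L[ℝ] E).toContinuousLinearMap.intervalIntegral_comp_comm hf

end intervalIntegral

open Complex Metric

section BanachAlgebra

variable {𝔸 : Type*} [NormedRing 𝔸] [NormedAlgebra ℂ 𝔸] [CompleteSpace 𝔸] {a : 𝔸}

theorem differentiableAt_ringInverse_one_sub_smul (ha : ∀ μ ∈ spectrum ℂ a, ‖μ‖ < 1) {z : ℂ}
    (hz : ‖z‖ ≤ 1) : DifferentiableAt ℂ (fun w : ℂ => Ring.inverse (1 - w • a)) z :=
  (differentiableAt_inverse (isUnit_one_sub_smul_of_spectrum_subset_ball ha hz)).comp z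
    ((differentiableAt_const 1).sub (differentiableAt_id.smul_const a))

theorem continuous_ringInverse_one_sub_exp_smul (ha : ∀ μ ∈ spectrum ℂ a, ‖μ‖ < 1) :
    Continuous fun θ : ℝ => Ring.inverse (1 - exp (θ * I) • a) :=
  continuous_iff_continuousAt.2 fun θ =>
    (NormedRing.inverse_continuousAt (isUnit_one_sub_smul_of_spectrum_subset_ball ha
      (norm_exp_ofReal_mul_I θ).le).unit).comp_of_eq (by fun_prop : Continuous _).continuousAt
      (IsUnit.unit_spec _).symm

theorem integral_exp_smul_ringInverse_one_sub_exp_smul_eq_zero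
    (ha : ∀ μ ∈ spectrum ℂ a, ‖μ‖ < 1) :
    ∫ θ in (0 : ℝ)..2 * Real.pi, exp (θ * I) • Ring.inverse (1 - exp (θ * I) • a) = 0 := by
  have hdiff : DiffContOnCl ℂ (fun w : ℂ => Ring.inverse (1 - w • a)) (ball 0 1) :=
    DifferentiableOn.diffContOnCl <| by
      rw [closure_ball 0 one_ne_zero]
      exact fun z hz => (differentiableAt_ringInverse_one_sub_smul ha
        (by simpa using hz)).differentiableWithinAt
  have hcauchy := hdiff.circleIntegral_eq_zero zero_le_one
  have hparam : (∮ z in C(0, 1), Ring.inverse (1 - z • a)) =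
      I • ∫ θ in (0 : ℝ)..2 * Real.pi, exp (θ * I) • Ring.inverse (1 - exp (θ * I) • a) := by
    rw [circleIntegral, ← intervalIntegral.integral_smul]
    simp only [deriv_circleMap, circleMap_zero, ofReal_one, one_mul, mul_comm _ I, mul_smul]
  rw [hparam, smul_eq_zero] at hcauchy
  exact hcauchy.resolve_left I_ne_zero

end BanachAlgebra

section StarAlgebra

variable {𝔸 : Type*} [NormedRing 𝔸] [NormedAlgebra ℂ 𝔸] [CompleteSpace 𝔸] [StarRing 𝔸]
  [StarModule ℂ 𝔸] [ContinuousStar 𝔸]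

noncomputable def reachabilityGramian (a c : 𝔸) : 𝔸 :=
  (1 / (2 * Real.pi) : ℂ) • ∫ θ in (0 : ℝ)..2 * Real.pi,
    Ring.inverse (1 - exp (θ * I) • a) * c * star (Ring.inverse (1 - exp (θ * I) • a))

theorem integral_ringInverse_mul_mul_star_eq {a : 𝔸} (ha : ∀ μ ∈ spectrum ℂ a, ‖μ‖ < 1)
    (c : 𝔸) :
    ∫ θ in (0 : ℝ)..2 * Real.pi,
        Ring.inverse (1 - exp (θ * I) • a) * c * star (Ring.inverse (1 - exp (θ * I) • a)) =
      (2 * Real.pi) • c + a * (∫ θ in (0 : ℝ)..2 * Real.pi,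
        Ring.inverse (1 - exp (θ * I) • a) * c * star (Ring.inverse (1 - exp (θ * I) • a))) *
          star a := by
  set m : ℝ → 𝔸 := fun θ => Ring.inverse (1 - exp (θ * I) • a)
  set n : ℝ → 𝔸 := fun θ => exp (θ * I) • m θ
  have hm : Continuous m := continuous_ringInverse_one_sub_exp_smul ha
  have hn : Continuous n := by fun_prop
  have hn_zero : ∫ θ in (0 : ℝ)..2 * Real.pi, n θ = 0 :=
    integral_exp_smul_ringInverse_one_sub_exp_smul_eq_zero ha
  have hsplit (θ : ℝ) : m θ * c * star (m θ) = c + a * n θ * c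
      + c * star (n θ) * star a + a * (m θ * c * star (m θ)) * star a :=
    mul_mul_star_eq_of_eq_one_add_mul (ringInverse_one_sub_smul_eq_one_add
      (isUnit_one_sub_smul_of_spectrum_subset_ball ha (norm_exp_ofReal_mul_I θ).le))
      (smul_mul_mul_star_smul_of_norm_eq_one (norm_exp_ofReal_mul_I θ) _ _)
  have hint {f : ℝ → 𝔸} (hf : Continuous f) :
      IntervalIntegrable f MeasureTheory.volume 0 (2 * Real.pi) :=
    hf.intervalIntegrable _ _
  calc ∫ θ in (0 : ℝ)..2 * Real.pi, m θ * c * star (m θ)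
      = ∫ θ in (0 : ℝ)..2 * Real.pi, c + a * n θ * c + c * star (n θ) * star a
          + a * (m θ * c * star (m θ)) * star a :=
        intervalIntegral.integral_congr fun θ _ => hsplit θ
    _ = _ := by
      rw [intervalIntegral.integral_add (hint (by fun_prop)) (hint (by fun_prop)),
        intervalIntegral.integral_add (hint (by fun_prop)) (hint (by fun_prop)),
        intervalIntegral.integral_add (hint (by fun_prop)) (hint (by fun_prop)),
        intervalIntegral.integral_const, intervalIntegral.integral_const_mul_mul_const (hint hn),
        intervalIntegral.integral_const_mul_mul_const (hint (by fun_prop)),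
        intervalIntegral.integral_star (hint hn),
        intervalIntegral.integral_const_mul_mul_const (hint (by fun_prop)), hn_zero, star_zero,
        mul_zero, zero_mul, mul_zero, zero_mul, add_zero, add_zero, sub_zero]

theorem reachabilityGramian_eq_mul_mul_star_add {a : 𝔸} (ha : ∀ μ ∈ spectrum ℂ a, ‖μ‖ < 1)
    (c : 𝔸) : reachabilityGramian a c = a * reachabilityGramian a c * star a + c := by
  have hscalar : (1 / (2 * Real.pi) : ℂ) * (2 * Real.pi : ℝ) = 1 := by
    push_cast
    exact one_div_mul_cancel (by exact_mod_cast Real.two_pi_pos.ne')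
  conv_lhs => rw [reachabilityGramian, integral_ringInverse_mul_mul_star_eq ha c]
  rw [reachabilityGramian, smul_add, ← Complex.coe_smul, smul_smul, hscalar, one_smul,
    mul_smul_comm, smul_mul_assoc, add_comm]

end StarAlgebra

section MatrixL2

-- Any norm on matrices gives the same entrywise integral; the L2 operator norm makes them a
-- Banach star-algebra.
open scoped Matrix.Norms.L2Operator

theorem Matrix.intervalIntegral_apply {n : Type*} [Fintype n] [DecidableEq n]
    {F : ℝ → Matrix n n ℂ} {s t : ℝ} (hF : IntervalIntegrable F MeasureTheory.volume s t)
    (i j : n) : (∫ θ in s..t, F θ) i j = ∫ θ in s..t, F θ i j :=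
  ((⟨entryLinearMap ℂ ℂ i j, continuous_id.matrix_elem i j⟩ : Matrix n n ℂ →L[ℂ] ℂ)
    |>.intervalIntegral_comp_comm hF).symm

theorem Matrix.reachabilityGramian_apply {n : Type*} [Fintype n] [DecidableEq n]
    {A : Matrix n n ℂ} (hA : ∀ μ ∈ spectrum ℂ A, ‖μ‖ < 1) (C : Matrix n n ℂ) (i j : n) :
    reachabilityGramian A C i j = (1 / (2 * Real.pi) : ℂ) * ∫ θ in (0 : ℝ)..2 * Real.pi,
      ((1 - exp (θ * I) • A)⁻¹ * C * ((1 - exp (θ * I) • A)⁻¹)ᴴ : Matrix n n ℂ) i j := by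
  have hm := continuous_ringInverse_one_sub_exp_smul hA
  rw [reachabilityGramian, Matrix.smul_apply,
    Matrix.intervalIntegral_apply ((by fun_prop : Continuous _).intervalIntegrable _ _)]
  simp only [nonsing_inv_eq_ringInverse, star_eq_conjTranspose, smul_eq_mul]

end MatrixL2

theorem gramian_integral_satisfies_lyapunov_general
    {n : ℕ}
    (A : Matrix (Fin n) (Fin n) ℂ) (B : Matrix (Fin n) (Fin 1) ℂ)
    (hA : ∀ μ ∈ spectrum ℂ A, ‖μ‖ < 1)
    (𝒢 : Matrix (Fin n) (Fin n) ℂ)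
    (h𝒢 : 𝒢 = Matrix.of fun i j =>
      (1 / (2 * Real.pi) : ℂ) * ∫ θ in (0:ℝ)..(2 * Real.pi),
        (((1 - Complex.exp (θ * Complex.I) • A)⁻¹ * B * Bᴴ *
          ((1 - Complex.exp (θ * Complex.I) • A)⁻¹)ᴴ :
          Matrix (Fin n) (Fin n) ℂ) i j)) :
    𝒢 = A * 𝒢 * Aᴴ + B * Bᴴ := by
  open scoped Matrix.Norms.L2Operator in
  suffices hgram : 𝒢 = reachabilityGramian A (B * Bᴴ) by
    rw [hgram]
    exact reachabilityGramian_eq_mul_mul_star_add hA _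
  ext i j
  rw [h𝒢, of_apply, Matrix.reachabilityGramian_apply hA]
  simp only [Matrix.mul_assoc]

/-- The reachability Gramian, given by the entrywise integral
`𝒢 = (1/2π) ∫₀^{2π} (I − e^{iθ}A)⁻¹ B B* ((I − e^{iθ}A)⁻¹)* dθ`,
satisfies the discrete-time Lyapunov equation `𝒢 = A 𝒢 A* + B B*`. -/
theorem gramian_integral_satisfies_lyapunov
    {n : ℕ} (hn : 1 ≤ n)
    (A : Matrix (Fin n) (Fin n) ℂ) (B : Matrix (Fin n) (Fin 1) ℂ)
    (hA : ∀ μ ∈ spectrum ℂ A, ‖μ‖ < 1)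
    (𝒢 : Matrix (Fin n) (Fin n) ℂ)
    (h𝒢 : 𝒢 = Matrix.of fun i j =>
      (1 / (2 * Real.pi) : ℂ) * ∫ θ in (0:ℝ)..(2 * Real.pi),
        (((1 - Complex.exp (θ * Complex.I) • A)⁻¹ * B * Bᴴ *
          ((1 - Complex.exp (θ * Complex.I) • A)⁻¹)ᴴ :
          Matrix (Fin n) (Fin n) ℂ) i j)) :
    𝒢 = A * 𝒢 * Aᴴ + B * Bᴴ :=
  gramian_integral_satisfies_lyapunov_general A B hA 𝒢 h𝒢
end

section
/- If the pair (A,B) is reachable, then the reachability Gramian 𝒢 = ∑_{k=0}^∞ Aᵏ B B* (A*)ᵏ is positive definite; in particular 𝒢 is invertible. -/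
/-!
Split the Gramian into its first `n` terms and the tail. The first `n` terms `AᵏB(AᵏB)ᴴ`,
`k < n`, add up to `ΓΓᴴ` for the controllability matrix `Γ`, which is positive definite because
`Γ` is invertible; the tail is a convergent series of positive semidefinite matrices, hence
positive semidefinite. Convergence comes from Gelfand's formula: `ρ(A) < r < 1` gives
`‖Aᵏ‖ ≤ rᵏ` for large `k`.
-/

open Matrix Filter
open scoped NNReal ComplexOrder

theorem spectrum.spectralRadius_lt_of_forall_lt_of_pos {𝕜 A : Type*} [NontriviallyNormedField 𝕜]
    [ProperSpace 𝕜] [NormedRing A] [NormedAlgebra 𝕜 A] [CompleteSpace A] {a : A} {r : ℝ≥0}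
    (hr : 0 < r) (h : ∀ z ∈ spectrum 𝕜 a, ‖z‖₊ < r) : spectralRadius 𝕜 a < r := by
  rcases (spectrum 𝕜 a).eq_empty_or_nonempty with hempty | hne
  · simpa [spectralRadius, hempty] using hr
  · exact spectrum.spectralRadius_lt_of_forall_lt_of_nonempty hne h

section Gelfand

variable {A : Type*} [NormedRing A] [NormedAlgebra ℂ A] [CompleteSpace A]

theorem spectrum.eventually_norm_pow_le_of_spectralRadius_lt {a : A} {r : ℝ≥0}
    (h : spectralRadius ℂ a < r) : ∀ᶠ k : ℕ in atTop, ‖a ^ k‖ ≤ r ^ k := by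
  filter_upwards
    [(spectrum.pow_nnnorm_pow_one_div_tendsto_nhds_spectralRadius a).eventually_lt_const h,
      eventually_ge_atTop 1] with k hk hk1
  have hk0 : (k : ℝ) ≠ 0 := by positivity
  have hpow := ENNReal.rpow_lt_rpow hk (by positivity : (0 : ℝ) < k)
  rw [← ENNReal.rpow_mul, one_div, inv_mul_cancel₀ hk0, ENNReal.rpow_one, ENNReal.rpow_natCast,
    ← ENNReal.coe_pow, ENNReal.coe_lt_coe] at hpow
  exact_mod_cast hpow.le

theorem summable_pow_mul_mul_star_pow [StarRing A] [NormedStarGroup A] {a : A}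
    (ha : spectralRadius ℂ a < 1) (c : A) : Summable fun k : ℕ => a ^ k * c * star a ^ k := by
  obtain ⟨r, hρr, hr1⟩ := ENNReal.lt_iff_exists_nnreal_btwn.mp ha
  have hr1 : (r : ℝ) < 1 := mod_cast hr1
  refine .of_norm_bounded_eventually_nat (g := fun k => ‖c‖ * ((r : ℝ) * r) ^ k)
    ((summable_geometric_of_lt_one (by positivity) (by nlinarith [r.coe_nonneg])).mul_left _) ?_
  filter_upwards [spectrum.eventually_norm_pow_le_of_spectralRadius_lt hρr] with k hk
  calc ‖a ^ k * c * star a ^ k‖ ≤ ‖a ^ k‖ * ‖c‖ * ‖a ^ k‖ :=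
        norm_mul₃_le.trans_eq (by rw [← star_pow, norm_star])
    _ ≤ r ^ k * ‖c‖ * r ^ k := by gcongr
    _ = ‖c‖ * ((r : ℝ) * r) ^ k := by rw [mul_pow]; ring

end Gelfand

theorem Matrix.summable_pow_mul_mul_conjTranspose_pow {n : Type*} [Fintype n] [DecidableEq n]
    {A : Matrix n n ℂ} (hA : ∀ μ ∈ spectrum ℂ A, ‖μ‖ < 1) (C : Matrix n n ℂ) :
    Summable fun k : ℕ => A ^ k * C * Aᴴ ^ k := by
  -- Any norm inducing the usual topology would do; the ℓ² operator norm is a C⋆-norm.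
  open scoped Matrix.Norms.L2Operator in
  exact summable_pow_mul_mul_star_pow
    (spectrum.spectralRadius_lt_of_forall_lt_of_pos one_pos fun μ hμ => mod_cast hA μ hμ) C

theorem Matrix.PosSemidef.tsum {ι n 𝕜 : Type*} [Fintype n] [RCLike 𝕜]
    {f : ι → Matrix n n 𝕜} (hf : Summable f) (h : ∀ i, (f i).PosSemidef) :
    (∑' i, f i).PosSemidef := by
  refine .of_dotProduct_mulVec_nonneg
    (conjTranspose_tsum.trans (tsum_congr fun i => (h i).isHermitian)) fun x => ?_
  let q : Matrix n n 𝕜 →+ 𝕜 :=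
    { toFun M := star x ⬝ᵥ (M *ᵥ x)
      map_zero' := by simp
      map_add' M N := by simp [add_mulVec, dotProduct_add] }
  have hq : Continuous q :=
    continuous_const.dotProduct (continuous_id.matrix_mulVec continuous_const)
  change 0 ≤ q (∑' i, f i)
  rw [hf.map_tsum q hq]
  exact tsum_nonneg fun i => (h i).dotProduct_mulVec_nonneg x

theorem Matrix.of_mul_conjTranspose_of_eq_sum {ι m R : Type*} [Fintype ι]
    [NonUnitalNonAssocSemiring R] [Star R] (v : ι → Matrix m (Fin 1) R) :
    of (fun i j => v j i 0) * (of fun i j => v j i 0)ᴴ = ∑ j, v j * (v j)ᴴ := by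
  ext i l
  simp [mul_apply, sum_apply]

theorem gramian_posDef_of_reachable_general
    {n : ℕ}
    (A : Matrix (Fin n) (Fin n) ℂ) (B : Matrix (Fin n) (Fin 1) ℂ)
    (hA : ∀ μ ∈ spectrum ℂ A, ‖μ‖ < 1)
    (hreach : IsUnit (Matrix.of fun (i : Fin n) (j : Fin n) => (A ^ (j : ℕ) * B) i 0)) :
    (∑' k : ℕ, A ^ k * B * Bᴴ * (Aᴴ) ^ k).PosDef ∧
      IsUnit (∑' k : ℕ, A ^ k * B * Bᴴ * (Aᴴ) ^ k) := by
  have hterm (k : ℕ) : A ^ k * B * Bᴴ * Aᴴ ^ k = (A ^ k * B) * (A ^ k * B)ᴴ := by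
    rw [conjTranspose_mul, conjTranspose_pow, Matrix.mul_assoc]
  have hsum : Summable fun k => A ^ k * B * Bᴴ * Aᴴ ^ k := by
    simpa only [Matrix.mul_assoc] using summable_pow_mul_mul_conjTranspose_pow hA (B * Bᴴ)
  have hhead : (∑ k ∈ Finset.range n, A ^ k * B * Bᴴ * Aᴴ ^ k).PosDef := by
    rw [← Fin.sum_univ_eq_sum_range (fun k => A ^ k * B * Bᴴ * Aᴴ ^ k)]
    simp only [hterm, ← of_mul_conjTranspose_of_eq_sum]
    exact PosDef.mul_conjTranspose_self _ (vecMul_injective_iff_isUnit.mpr hreach)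
  have htail : (∑' k, A ^ (k + n) * B * Bᴴ * Aᴴ ^ (k + n)).PosSemidef :=
    PosSemidef.tsum ((summable_nat_add_iff n).mpr hsum) fun k =>
      hterm (k + n) ▸ posSemidef_self_mul_conjTranspose _
  have hG := hhead.add_posSemidef htail
  rw [hsum.sum_add_tsum_nat_add] at hG
  exact ⟨hG, hG.isUnit⟩

/-- If the pair `(A,B)` is reachable (the controllability matrix
`Γ = [B, AB, …, A^{n−1}B]` is invertible), then the reachability Gramian
`𝒢 = ∑_{k=0}^∞ Aᵏ B B* (A*)ᵏ` is positive definite; in particular it is invertible. -/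
theorem gramian_posDef_of_reachable
    {n : ℕ} (hn : 1 ≤ n)
    (A : Matrix (Fin n) (Fin n) ℂ) (B : Matrix (Fin n) (Fin 1) ℂ)
    (hA : ∀ μ ∈ spectrum ℂ A, ‖μ‖ < 1)
    (hreach : IsUnit (Matrix.of fun (i : Fin n) (j : Fin n) => (A ^ (j : ℕ) * B) i 0)) :
    (∑' k : ℕ, A ^ k * B * Bᴴ * (Aᴴ) ^ k).PosDef ∧
      IsUnit (∑' k : ℕ, A ^ k * B * Bᴴ * (Aᴴ) ^ k) :=
  gramian_posDef_of_reachable_general A B hA hreach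
end

section
/- Let f : ℂ → ℂ be continuous on the closed unit disc and analytic on the open unit disc, with Taylor expansion f(z) = ∑_{k=0}^∞ f_k zᵏ on the open disc. Then (1/2π) ∫₀^{2π} conj(f(e^{iθ})) · (I − e^{iθ}A)⁻¹ B dθ = (∑_{k=0}^∞ conj(f_k) Aᵏ) B, where the matrix series on the right converges. -/
/-! Gelfand's formula makes `‖Aᵏ‖` summable, so on the unit circle the Neumann series
`(1 - zA)⁻¹ B = ∑ zᵏ AᵏB` converges absolutely, uniformly in `z`. Integrating it term by term
against `conj (f z)` leaves the integrals `∫ conj (f (e^{iθ})) e^{ikθ} dθ = 2π conj (f_k)`: the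
conjugate of Cauchy's formula for the Taylor coefficients, valid on the unit circle itself because
`f` is continuous on the closed disc. Cauchy's estimate bounds the `f_k`, so `∑ conj (f_k) Aᵏ`
converges too. -/

open Filter MeasureTheory Complex
open scoped NNReal Real ComplexConjugate

section BanachAlgebra

variable {A : Type*} [NormedRing A] [NormedAlgebra ℂ A] [CompleteSpace A]

theorem spectralRadius_lt_one_of_forall_norm_lt_one {a : A} (h : ∀ μ ∈ spectrum ℂ a, ‖μ‖ < 1) :
    spectralRadius ℂ a < 1 := by
  rcases subsingleton_or_nontrivial A with _ | _
  · simp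
  · exact_mod_cast spectrum.spectralRadius_lt_of_forall_lt a (r := 1) fun μ hμ => by
      exact_mod_cast h μ hμ

theorem summable_norm_pow_of_spectralRadius_lt_one {a : A} (h : spectralRadius ℂ a < 1) :
    Summable (‖a ^ ·‖) := by
  obtain ⟨s, hρs, hs1⟩ := ENNReal.lt_iff_exists_nnreal_btwn.mp h
  refine Summable.of_norm_bounded_eventually_nat
    (summable_geometric_of_lt_one s.coe_nonneg (by exact_mod_cast hs1)) ?_
  filter_upwards [(spectrum.pow_norm_pow_one_div_tendsto_nhds_spectralRadius a).eventually_lt_const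
    hρs, eventually_ne_atTop 0] with k hk hk0
  rw [norm_norm, ← Real.rpow_natCast, ← Real.rpow_inv_le_iff_of_pos (norm_nonneg _) s.coe_nonneg
    (by positivity), ← one_div]
  exact ((ENNReal.ofReal_lt_coe_iff (by positivity)).1 hk).le

end BanachAlgebra

section Matrix

attribute [local instance] Matrix.linftyOpSeminormedAddCommGroup

variable {ι l m n R : Type*} [Fintype m]

theorem Matrix.norm_apply_le_linfty_opNorm [Fintype l] [SeminormedAddCommGroup R]
    (M : Matrix l m R) (i : l) (j : m) : ‖M i j‖ ≤ ‖M‖ := by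
  have h : ‖M i j‖₊ ≤ ‖M‖₊ := by
    rw [Matrix.linfty_opNNNorm_def]
    exact (Finset.single_le_sum (fun _ _ => zero_le) (Finset.mem_univ j)).trans
      (Finset.le_sup (f := fun i => ∑ j, ‖M i j‖₊) (Finset.mem_univ i))
  exact_mod_cast h

variable [TopologicalSpace R]

theorem HasSum.matrix_mul_const [NonUnitalNonAssocSemiring R] [IsTopologicalSemiring R]
    {f : ι → Matrix l m R} {a : Matrix l m R} (hf : HasSum f a) (B : Matrix m n R) :
    HasSum (fun k => f k * B) (a * B) :=
  Pi.hasSum.2 fun i => Pi.hasSum.2 fun j =>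
    hasSum_sum fun r _ => (Pi.hasSum.1 (Pi.hasSum.1 hf i) r).mul_right (B r j)

theorem Matrix.hasSum_pow_inv_one_sub [DecidableEq m] [CommRing R] [IsTopologicalRing R]
    [T2Space R] {x : Matrix m m R} (hx : Summable (x ^ ·)) : HasSum (x ^ ·) (1 - x)⁻¹ := by
  rw [Matrix.inv_eq_right_inv hx.one_sub_mul_tsum_pow]
  exact hx.hasSum

end Matrix

section TaylorCoefficients

variable {f : ℂ → ℂ} {c : ℕ → ℂ} {R : ℝ≥0}

theorem hasFPowerSeriesOnBall_ofScalars_of_hasSum (hR : 0 < R)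
    (hf : ∀ z ∈ Metric.ball (0 : ℂ) R, HasSum (fun k => c k * z ^ k) (f z)) :
    HasFPowerSeriesOnBall f (.ofScalars ℂ c) 0 R where
  r_le := by
    refine ENNReal.le_of_forall_nnreal_lt fun s hs => ?_
    have hs : (s : ℂ) ∈ Metric.ball 0 R := by simpa using hs
    refine FormalMultilinearSeries.le_radius_of_summable _ ?_
    simpa [FormalMultilinearSeries.ofScalars_norm] using (hf _ hs).summable.norm
  r_pos := by simpa using hR
  hasSum {z} hz := by
    simpa [FormalMultilinearSeries.ofScalars_apply_eq, mul_comm] using hf z (by simpa using hz)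

theorem ofScalars_eq_cauchyPowerSeries (hR : 0 < R)
    (hcont : ContinuousOn f (Metric.closedBall 0 R))
    (hf : ∀ z ∈ Metric.ball (0 : ℂ) R, HasSum (fun k => c k * z ^ k) (f z)) :
    .ofScalars ℂ c = cauchyPowerSeries f 0 R := by
  have hps := hasFPowerSeriesOnBall_ofScalars_of_hasSum hR hf
  have hcauchy : HasFPowerSeriesOnBall f (cauchyPowerSeries f 0 R) 0 R :=
    DiffContOnCl.hasFPowerSeriesOnBall
      ⟨by simpa using hps.differentiableOn, by rwa [closure_ball _ (by positivity)]⟩ hR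
  exact hps.hasFPowerSeriesAt.eq_formalMultilinearSeries hcauchy.hasFPowerSeriesAt

theorem two_pi_mul_coeff_eq_integral (hcont : ContinuousOn f (Metric.closedBall 0 1))
    (hf : ∀ z ∈ Metric.ball (0 : ℂ) 1, HasSum (fun k => c k * z ^ k) (f z)) (k : ℕ) :
    2 * π * c k = ∫ θ in (0 : ℝ)..2 * π, f (exp (θ * I)) * (exp (θ * I))⁻¹ ^ k := by
  have hc : c k = cauchyPowerSeries f 0 1 k fun _ => 1 := by
    have h := ofScalars_eq_cauchyPowerSeries (R := 1) one_pos (by simpa using hcont)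
      (by simpa using hf)
    rw [NNReal.coe_one] at h
    rw [← h]
    simp
  rw [hc, cauchyPowerSeries_apply, circleIntegral, smul_eq_mul, ← mul_assoc,
    ← intervalIntegral.integral_const_mul]
  refine intervalIntegral.integral_congr fun θ _ => ?_
  simp only [deriv_circleMap, circleMap_zero, ofReal_one, one_mul, sub_zero, smul_eq_mul]
  field_simp

theorem integral_conj_mul_exp_pow (hcont : ContinuousOn f (Metric.closedBall 0 1))
    (hf : ∀ z ∈ Metric.ball (0 : ℂ) 1, HasSum (fun k => c k * z ^ k) (f z)) (k : ℕ) :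
    ∫ θ in (0 : ℝ)..2 * π, conj (f (exp (θ * I))) * exp (θ * I) ^ k = 2 * π * conj (c k) := by
  have h := congrArg conj (two_pi_mul_coeff_eq_integral hcont hf k)
  rw [← intervalIntegral.intervalIntegral_conj] at h
  simpa [← exp_conj, exp_neg, map_ofNat] using h.symm

theorem norm_coeff_le_of_hasSum (hR : 0 < R) (hcont : ContinuousOn f (Metric.closedBall 0 R))
    (hf : ∀ z ∈ Metric.ball (0 : ℂ) R, HasSum (fun k => c k * z ^ k) (f z)) (k : ℕ) :
    ‖c k‖ ≤ ((2 * π)⁻¹ * ∫ θ in (0 : ℝ)..2 * π, ‖f (circleMap 0 R θ)‖) * (R : ℝ)⁻¹ ^ k := by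
  have h := norm_cauchyPowerSeries_le f 0 R k
  rwa [← ofScalars_eq_cauchyPowerSeries hR hcont hf, FormalMultilinearSeries.ofScalars_norm,
    NNReal.abs_eq] at h

theorem hasSum_two_pi_mul_conj_coeff_mul (hcont : ContinuousOn f (Metric.closedBall 0 1))
    (hf : ∀ z ∈ Metric.ball (0 : ℂ) 1, HasSum (fun k => c k * z ^ k) (f z))
    {d : ℕ → ℂ} (hd : Summable (‖d ·‖)) :
    HasSum (fun k => 2 * π * (conj (c k) * d k))
      (∫ θ in (0 : ℝ)..2 * π, conj (f (exp (θ * I))) * ∑' k, exp (θ * I) ^ k * d k) := by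
  obtain ⟨M, hM⟩ := (isCompact_sphere (0 : ℂ) 1).exists_bound_of_continuousOn
    (hcont.mono Metric.sphere_subset_closedBall)
  have hsphere (θ : ℝ) : exp (θ * I) ∈ Metric.sphere (0 : ℂ) 1 := by simp
  have hfe : Continuous fun θ : ℝ => f (exp (θ * I)) :=
    hcont.comp_continuous (by fun_prop) fun θ => Metric.sphere_subset_closedBall (hsphere θ)
  have hnorm (θ : ℝ) (k : ℕ) : ‖exp (θ * I) ^ k * d k‖ = ‖d k‖ := by simp
  have hint (k : ℕ) : ∫ θ in (0 : ℝ)..2 * π, conj (f (exp (θ * I))) * (exp (θ * I) ^ k * d k) =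
      2 * π * (conj (c k) * d k) := by
    simp_rw [← mul_assoc, intervalIntegral.integral_mul_const, integral_conj_mul_exp_pow hcont hf]
  simp_rw [← hint]
  refine intervalIntegral.hasSum_integral_of_dominated_convergence (fun k _ => M * ‖d k‖)
    (fun k => ((continuous_conj.comp hfe).mul (by fun_prop)).aestronglyMeasurable)
    (fun k => ae_of_all _ fun θ _ => ?_) (ae_of_all _ fun θ _ => hd.mul_left M)
    intervalIntegrable_const (ae_of_all _ fun θ _ => ?_)
  · rw [norm_mul, RCLike.norm_conj, hnorm]
    exact mul_le_mul_of_nonneg_right (hM _ (hsphere θ)) (norm_nonneg _)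
  · exact (Summable.of_norm (hd.congr fun k => (hnorm θ k).symm)).hasSum.mul_left _

end TaylorCoefficients

attribute [local instance] Matrix.linftyOpNormedAddCommGroup Matrix.linftyOpNormedRing
  Matrix.linftyOpNormedAlgebra

theorem inner_product_with_G_eval_general
    {n : ℕ}
    (A : Matrix (Fin n) (Fin n) ℂ) (B : Matrix (Fin n) (Fin 1) ℂ)
    (hA : ∀ μ ∈ spectrum ℂ A, ‖μ‖ < 1)
    (f : ℂ → ℂ) (c : ℕ → ℂ)
    (hf_cont : ContinuousOn f (Metric.closedBall (0:ℂ) 1))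
    (hf_taylor : ∀ z ∈ Metric.ball (0:ℂ) 1, HasSum (fun k : ℕ => c k * z ^ k) (f z)) :
    Summable (fun k : ℕ => (starRingEnd ℂ) (c k) • A ^ k) ∧
      (Matrix.of fun i j =>
        (1 / (2 * Real.pi) : ℂ) * ∫ θ in (0:ℝ)..(2 * Real.pi),
          (starRingEnd ℂ) (f (Complex.exp (θ * Complex.I))) *
            (((1 - Complex.exp (θ * Complex.I) • A)⁻¹ * B :
              Matrix (Fin n) (Fin 1) ℂ) i j)) =
      (∑' k : ℕ, (starRingEnd ℂ) (c k) • A ^ k) * B := by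
  have hA_sum : Summable (‖A ^ ·‖) :=
    summable_norm_pow_of_spectralRadius_lt_one (spectralRadius_lt_one_of_forall_norm_lt_one hA)
  obtain ⟨M, hM⟩ : ∃ M, ∀ k, ‖c k‖ ≤ M := ⟨_, fun k => by
    simpa using norm_coeff_le_of_hasSum (R := 1) one_pos (by simpa using hf_cont)
      (by simpa using hf_taylor) k⟩
  have hsum : Summable fun k => conj (c k) • A ^ k :=
    .of_norm_bounded (hA_sum.mul_left M) fun k => by
      rw [norm_smul, RCLike.norm_conj]
      exact mul_le_mul_of_nonneg_right (hM k) (norm_nonneg _)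
  refine ⟨hsum, ?_⟩
  ext i j
  set d : ℕ → ℂ := fun k => (A ^ k * B) i j
  have hd : Summable (‖d ·‖) := .of_nonneg_of_le (fun _ => norm_nonneg _)
    (fun k => (Matrix.norm_apply_le_linfty_opNorm _ i j).trans (Matrix.linfty_opNorm_mul _ _))
    (hA_sum.mul_right ‖B‖)
  have hG (θ : ℝ) : ((1 - exp (θ * I) • A)⁻¹ * B) i j = ∑' k, exp (θ * I) ^ k * d k := by
    have hz : Summable ((exp (θ * I) • A) ^ ·) := .of_norm <| hA_sum.congr fun k => by
      rw [smul_pow, norm_smul, norm_pow (exp _), norm_exp_ofReal_mul_I, one_pow, one_mul]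
    have h := Pi.hasSum.1 (Pi.hasSum.1 ((Matrix.hasSum_pow_inv_one_sub hz).matrix_mul_const B) i) j
    simpa [d, smul_pow, Matrix.smul_mul] using h.tsum_eq.symm
  have hRHS : HasSum (fun k => conj (c k) * d k) (((∑' k, conj (c k) • A ^ k) * B) i j) := by
    simpa [d, Matrix.smul_mul] using Pi.hasSum.1 (Pi.hasSum.1 (hsum.hasSum.matrix_mul_const B) i) j
  have hLHS := hasSum_two_pi_mul_conj_coeff_mul hf_cont hf_taylor hd
  rw [Matrix.of_apply]
  simp_rw [hG, hLHS.unique (hRHS.mul_left _)]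
  field_simp

/-- For `f` continuous on the closed unit disc and analytic on the open unit
disc with Taylor expansion `f(z) = ∑ f_k zᵏ` there, one has
`(1/2π) ∫₀^{2π} conj(f(e^{iθ})) (I − e^{iθ}A)⁻¹ B dθ = (∑ conj(f_k) Aᵏ) B`,
the matrix series on the right being convergent. -/
theorem inner_product_with_G_eval
    {n : ℕ} (hn : 1 ≤ n)
    (A : Matrix (Fin n) (Fin n) ℂ) (B : Matrix (Fin n) (Fin 1) ℂ)
    (hA : ∀ μ ∈ spectrum ℂ A, ‖μ‖ < 1)
    (f : ℂ → ℂ) (c : ℕ → ℂ)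
    (hf_cont : ContinuousOn f (Metric.closedBall (0:ℂ) 1))
    (hf_anal : AnalyticOn ℂ f (Metric.ball (0:ℂ) 1))
    (hf_taylor : ∀ z ∈ Metric.ball (0:ℂ) 1, HasSum (fun k : ℕ => c k * z ^ k) (f z)) :
    Summable (fun k : ℕ => (starRingEnd ℂ) (c k) • A ^ k) ∧
      (Matrix.of fun i j =>
        (1 / (2 * Real.pi) : ℂ) * ∫ θ in (0:ℝ)..(2 * Real.pi),
          (starRingEnd ℂ) (f (Complex.exp (θ * Complex.I))) *
            (((1 - Complex.exp (θ * Complex.I) • A)⁻¹ * B :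
              Matrix (Fin n) (Fin 1) ℂ) i j)) =
      (∑' k : ℕ, (starRingEnd ℂ) (c k) • A ^ k) * B :=
  inner_product_with_G_eval_general A B hA f c hf_cont hf_taylor
end

section
/- Let μ be a finite positive Borel measure on [0, 2π] and suppose Σ = ∫ (I − e^{iθ}A)⁻¹ B B* ((I − e^{iθ}A)⁻¹)* dμ(θ). Then there exists a 1×n complex row vector L such that Σ − A Σ A* = B L + (B L)*. -/
/-!
For `|z| = 1` the resolvent `R = (1 - z A)⁻¹` exists because `z⁻¹` lies outside the spectrum,
and `z A R = R - 1`. Hence `A (R C R*) A* = (R - 1) C (R - 1)*` for every `C`, so the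
displacement of each integrand `R B B* R*` is `R B B* + B B* R* - B B* = B L_θ + (B L_θ)*` with
`L_θ = B* R* - B*/2`. Integrating entrywise, which commutes with constant matrix factors and
with `*`, gives the claim with `L = ∫ L_θ dμ`.
-/

open Matrix MeasureTheory

theorem spectrum.isUnit_one_sub_smul_of_inv_notMem {𝕜 A : Type*} [Field 𝕜] [Ring A]
    [Algebra 𝕜 A] {a : A} {z : 𝕜} (hz : z ≠ 0) (h : z⁻¹ ∉ spectrum 𝕜 a) :
    IsUnit (1 - z • a) := by
  have hu : IsUnit ((Units.mk0 z hz)⁻¹ • (1 : A) - a) := by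
    rwa [Units.smul_def, Units.val_inv_eq_inv_val, Units.val_mk0,
      ← Algebra.algebraMap_eq_smul_one, ← spectrum.notMem_iff]
  rwa [IsUnit.smul_sub_iff_sub_inv_smul, inv_inv] at hu

theorem isUnit_one_sub_smul_of_norm_eq_one {A : Type*} [Ring A] [Algebra ℂ A] {a : A}
    (ha : ∀ μ ∈ spectrum ℂ a, ‖μ‖ < 1) {z : ℂ} (hz : ‖z‖ = 1) : IsUnit (1 - z • a) :=
  spectrum.isUnit_one_sub_smul_of_inv_notMem (norm_ne_zero_iff.mp (by simp [hz]))
    fun h => (ha _ h).ne (by simp [hz])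

theorem mul_mul_star_sub_conj_of_one_sub_smul_mul_eq_one {K R : Type*} [CommRing K]
    [StarRing K] [Ring R] [StarRing R] [Algebra K R] [StarModule K R] {a r : R} (c : R)
    {z : K} (hz : star z * z = 1) (hr : (1 - z • a) * r = 1) :
    r * c * star r - a * (r * c * star r) * star a = r * c + c * star r - c := by
  have har : z • (a * r) = r - 1 := by
    rw [sub_mul, one_mul, smul_mul_assoc] at hr
    rw [← hr]
    abel
  have hconj : a * (r * c * star r) * star a = (r - 1) * c * star (r - 1) := by
    calc a * (r * c * star r) * star a = (star z * z) • (a * r * c * star (a * r)) := by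
          rw [hz, one_smul, star_mul]; noncomm_ring
      _ = z • (a * r) * c * star (z • (a * r)) := by
          rw [star_smul, smul_mul_assoc, smul_mul_assoc, mul_smul_comm, smul_smul, mul_comm]
      _ = (r - 1) * c * star (r - 1) := by rw [har]
  rw [hconj, star_sub, star_one]
  noncomm_ring

theorem Continuous.matrix_inv_of_isUnit {X n 𝕜 : Type*} [TopologicalSpace X] [Fintype n]
    [DecidableEq n] [Field 𝕜] [TopologicalSpace 𝕜] [IsTopologicalDivisionRing 𝕜]
    {M : X → Matrix n n 𝕜} (hM : Continuous M) (h : ∀ x, IsUnit (M x)) :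
    Continuous fun x => (M x)⁻¹ :=
  continuous_iff_continuousAt.2 fun x =>
    (continuousAt_matrix_inv _ (by
      rw [Ring.inverse_eq_inv']
      exact continuousAt_inv₀ ((isUnit_iff_isUnit_det _).mp (h x)).ne_zero)).comp
      hM.continuousAt

namespace Matrix

variable {X l m n p 𝕜 : Type*} [MeasurableSpace X] [RCLike 𝕜]

noncomputable def entrywiseIntegral (F : X → Matrix m n 𝕜) (μ : Measure X) : Matrix m n 𝕜 :=
  of fun i j => ∫ x, F x i j ∂μ

variable {μ : Measure X} {F G : X → Matrix m n 𝕜}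

theorem entrywiseIntegral_add (hF : ∀ i j, Integrable (fun x => F x i j) μ)
    (hG : ∀ i j, Integrable (fun x => G x i j) μ) :
    entrywiseIntegral (fun x => F x + G x) μ = entrywiseIntegral F μ + entrywiseIntegral G μ := by
  ext i j
  exact integral_add (hF i j) (hG i j)

theorem entrywiseIntegral_sub (hF : ∀ i j, Integrable (fun x => F x i j) μ)
    (hG : ∀ i j, Integrable (fun x => G x i j) μ) :
    entrywiseIntegral (fun x => F x - G x) μ = entrywiseIntegral F μ - entrywiseIntegral G μ := by
  ext i j
  exact integral_sub (hF i j) (hG i j)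

theorem conjTranspose_entrywiseIntegral :
    (entrywiseIntegral F μ)ᴴ = entrywiseIntegral (fun x => (F x)ᴴ) μ := by
  ext i j
  exact integral_conj.symm

theorem mul_entrywiseIntegral [Fintype m] (P : Matrix l m 𝕜)
    (hF : ∀ i j, Integrable (fun x => F x i j) μ) :
    P * entrywiseIntegral F μ = entrywiseIntegral (fun x => P * F x) μ := by
  ext i j
  simp only [entrywiseIntegral, mul_apply, of_apply]
  rw [integral_finsetSum _ fun k _ => (hF k j).const_mul _]
  simp only [integral_const_mul]

theorem entrywiseIntegral_mul [Fintype n] (Q : Matrix n p 𝕜)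
    (hF : ∀ i j, Integrable (fun x => F x i j) μ) :
    entrywiseIntegral F μ * Q = entrywiseIntegral (fun x => F x * Q) μ := by
  ext i j
  simp only [entrywiseIntegral, mul_apply, of_apply]
  rw [integral_finsetSum _ fun k _ => (hF i k).mul_const _]
  simp only [integral_mul_const]

end Matrix

-- The self-adjoint term `B Bᴴ` of the displacement is split evenly between `B L` and `(B L)ᴴ`.
theorem Matrix.resolvent_gram_displacement {m n : Type*} [Fintype m] [Fintype n] [DecidableEq n]
    {A R : Matrix n n ℂ} (B : Matrix n m ℂ) {z : ℂ} (hz : star z * z = 1)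
    (hR : (1 - z • A) * R = 1) :
    R * B * Bᴴ * Rᴴ - A * (R * B * Bᴴ * Rᴴ) * Aᴴ
      = B * (Bᴴ * Rᴴ - (2⁻¹ : ℂ) • Bᴴ) + (B * (Bᴴ * Rᴴ - (2⁻¹ : ℂ) • Bᴴ))ᴴ := by
  have h := mul_mul_star_sub_conj_of_one_sub_smul_mul_eq_one (B * Bᴴ) hz hR
  simp only [star_eq_conjTranspose, ← Matrix.mul_assoc R B] at h
  rw [h]
  simp only [conjTranspose_mul, conjTranspose_sub, conjTranspose_smul, conjTranspose_conjTranspose,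
    star_inv₀, star_ofNat, Matrix.mul_sub, Matrix.mul_smul, Matrix.mul_assoc]
  module

theorem state_covariance_displacement_general
    {n : ℕ}
    (A : Matrix (Fin n) (Fin n) ℂ) (B : Matrix (Fin n) (Fin 1) ℂ)
    (hA : ∀ μ ∈ spectrum ℂ A, ‖μ‖ < 1)
    (μ : Measure ℝ) [IsFiniteMeasure μ]
    (S : Matrix (Fin n) (Fin n) ℂ)
    (hS : S = Matrix.of fun i j =>
      ∫ θ in Set.Icc (0:ℝ) (2 * Real.pi),
        (((1 - Complex.exp (θ * Complex.I) • A)⁻¹ * B * Bᴴ *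
          ((1 - Complex.exp (θ * Complex.I) • A)⁻¹)ᴴ :
          Matrix (Fin n) (Fin n) ℂ) i j) ∂μ) :
    ∃ L : Matrix (Fin 1) (Fin n) ℂ, S - A * S * Aᴴ = B * L + (B * L)ᴴ := by
  set ν := μ.restrict (Set.Icc 0 (2 * Real.pi))
  set R : ℝ → Matrix (Fin n) (Fin n) ℂ := fun θ => (1 - Complex.exp (θ * Complex.I) • A)⁻¹
  have hunit (θ : ℝ) : IsUnit (1 - Complex.exp (θ * Complex.I) • A) :=
    isUnit_one_sub_smul_of_norm_eq_one hA (Complex.norm_exp_ofReal_mul_I θ)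
  have hR : Continuous R := Continuous.matrix_inv_of_isUnit (by fun_prop) hunit
  have hentry {p q : Type} {G : ℝ → Matrix p q ℂ} (hG : Continuous G) (i : p) (j : q) :
      Integrable (fun θ => G θ i j) ν :=
    (hG.matrix_elem i j).integrableOn_Icc
  have hS' : S = entrywiseIntegral (fun θ => R θ * B * Bᴴ * (R θ)ᴴ) ν := hS
  refine ⟨entrywiseIntegral (fun θ => Bᴴ * (R θ)ᴴ - (2⁻¹ : ℂ) • Bᴴ) ν, ?_⟩
  rw [hS', mul_entrywiseIntegral _ (hentry (by fun_prop)),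
    entrywiseIntegral_mul _ (hentry (by fun_prop)),
    ← entrywiseIntegral_sub (hentry (by fun_prop)) (hentry (by fun_prop)),
    mul_entrywiseIntegral _ (hentry (by fun_prop)), conjTranspose_entrywiseIntegral,
    ← entrywiseIntegral_add (hentry (by fun_prop)) (hentry (by fun_prop))]
  congr 1
  funext θ
  have hz : star (Complex.exp (θ * Complex.I)) * Complex.exp (θ * Complex.I) = 1 := by
    rw [Complex.star_def, Complex.conj_mul', Complex.norm_exp_ofReal_mul_I]
    simp
  exact resolvent_gram_displacement B hz
    (mul_nonsing_inv _ ((isUnit_iff_isUnit_det _).mp (hunit θ)))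

/-- If `S = ∫ (I − e^{iθ}A)⁻¹ B B* ((I − e^{iθ}A)⁻¹)* dμ(θ)` for a finite
positive measure `μ` on `[0,2π]`, then there exists a row vector `L` such that
`S − A S A* = B L + (B L)*`. -/
theorem state_covariance_displacement
    {n : ℕ} (hn : 1 ≤ n)
    (A : Matrix (Fin n) (Fin n) ℂ) (B : Matrix (Fin n) (Fin 1) ℂ)
    (hA : ∀ μ ∈ spectrum ℂ A, ‖μ‖ < 1)
    (μ : Measure ℝ) [IsFiniteMeasure μ]
    (S : Matrix (Fin n) (Fin n) ℂ)
    (hS : S = Matrix.of fun i j =>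
      ∫ θ in Set.Icc (0:ℝ) (2 * Real.pi),
        (((1 - Complex.exp (θ * Complex.I) • A)⁻¹ * B * Bᴴ *
          ((1 - Complex.exp (θ * Complex.I) • A)⁻¹)ᴴ :
          Matrix (Fin n) (Fin n) ℂ) i j) ∂μ) :
    ∃ L : Matrix (Fin 1) (Fin n) ℂ, S - A * S * Aᴴ = B * L + (B * L)ᴴ :=
  state_covariance_displacement_general A B hA μ S hS
end

section
/- Let Ξ be an n×n Hermitian positive semidefinite complex matrix. Then there exists a 1×n complex row vector ξ such that for every θ ∈ [0, 2π], G(e^{iθ})* Ξ G(e^{iθ}) = |ξ G(e^{iθ})|², where G(z) = (I − zA)⁻¹B; that is, the nonnegative scalar function G^⋆ Ξ G on the unit circle factors as (ξG)^⋆ (ξG). -/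
/-!
Write `Ξ = Mᴴ M` and `G(z) = q(z) / f(z)` with `f = det (1 - z A)` and `q = adj (1 - z A) B`,
a vector of polynomials of degree `< n`. With `u = M q` we get `G* Ξ G = ∑ |uᵢ|² / |f|²`, and by the
Fejér–Riesz theorem `∑ |uᵢ|² = |r|²` on the unit circle for a single polynomial `r` of degree `< n`.
Modulo `Xⁿ`, `q ≡ f · ∑ₗ Xˡ Aˡ B` with `f(0) = 1`, so reachability makes the entries of `q` linearly
independent, hence a basis of the polynomials of degree `< n`. Thus `r = ξ q` for a row `ξ`, and
`G* Ξ G = |ξ G|²`.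

Fejér–Riesz goes by induction on `d`: if `F(z) / zᵈ ≥ 0` on the circle then `F` is self-reciprocal,
so with each root `ρ` also `1 / ρ̄` is a root; a root on the circle is a minimum of `F(z) / zᵈ`,
hence double. Dividing `F` by `(z - ρ)(z - 1 / ρ̄) = -z |z - ρ|² / ρ̄` lowers `d` by one.
-/

open Matrix Polynomial ComplexConjugate
open scoped ComplexOrder

lemma Circle.dense_setOf_coe_exp_ne (ρ : ℂ) : Dense {θ : ℝ | (Circle.exp θ : ℂ) ≠ ρ} := by
  have hcount : {θ : ℝ | (Circle.exp θ : ℂ) = ρ}.Countable := by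
    rcases Set.eq_empty_or_nonempty {θ : ℝ | (Circle.exp θ : ℂ) = ρ} with h | ⟨θ₀, hθ₀⟩
    · rw [h]
      exact Set.countable_empty
    refine (Set.countable_range fun m : ℤ => θ₀ + m * (2 * Real.pi)).mono fun θ hθ => ?_
    obtain ⟨m, hm⟩ := Circle.exp_eq_exp.1 (Circle.coe_injective (hθ.trans hθ₀.symm))
    exact ⟨m, hm.symm⟩
  simpa only [Set.compl_ofPred] using hcount.dense_compl ℝ

lemma Circle.sub_mul_sub_inv_conj (z : Circle) {ρ : ℂ} (hρ : ρ ≠ 0) :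
    ((z : ℂ) - ρ) * ((z : ℂ) - (conj ρ)⁻¹) = -(conj ρ)⁻¹ * z * ‖(z : ℂ) - ρ‖ ^ 2 := by
  have hρ' : conj ρ ≠ 0 := by simpa using hρ
  rw [← Complex.mul_conj', map_sub, ← Circle.coe_inv_eq_conj, Circle.coe_inv]
  field_simp [z.coe_ne_zero]
  ring

lemma HasDerivAt.eq_zero_of_nonneg_of_eq_zero {g : ℝ → ℂ} {g' : ℂ} {x : ℝ}
    (hg : HasDerivAt g g' x) (hnonneg : ∀ t, 0 ≤ g t) (hx : g x = 0) : g' = 0 := by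
  have hre : g'.re = 0 := by
    refine IsLocalMin.hasDerivAt_eq_zero (f := fun t => (g t).re)
      (Filter.Eventually.of_forall fun t => ?_) (Complex.reCLM.hasFDerivAt.comp_hasDerivAt x hg)
    simpa [hx] using (Complex.nonneg_iff.1 (hnonneg t)).1
  have him : g'.im = 0 := by
    have hconst : (fun t => (g t).im) = fun _ => 0 :=
      funext fun t => (Complex.nonneg_iff.1 (hnonneg t)).2.symm
    have := Complex.imCLM.hasFDerivAt.comp_hasDerivAt x hg
    exact ((hasDerivAt_const x (0 : ℝ)).unique (hconst ▸ this)).symm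
  exact Complex.ext hre him

namespace Polynomial

lemma eq_of_eval_eq_on_circle {p q : ℂ[X]}
    (h : ∀ z : Circle, p.eval (z : ℂ) = q.eval (z : ℂ)) : p = q := by
  have hinf : (((↑) : Circle → ℂ) '' (Circle.exp '' Set.Icc 0 1)).Infinite :=
    ((Set.Icc_infinite zero_lt_one).image
      (Circle.exp_injOn_Icc (by linarith [Real.pi_gt_three]))).image Circle.coe_injective.injOn
  refine eq_of_infinite_eval_eq p q (hinf.mono ?_)
  rintro _ ⟨z, -, rfl⟩
  exact h z

/-- The trigonometric polynomial `θ ↦ F(e^{iθ}) e^{-idθ}`, of degree `d` when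
`F.natDegree ≤ 2 * d`, is nonnegative. -/
def NonnegOnCircle (d : ℕ) (F : ℂ[X]) : Prop :=
  ∀ z : Circle, 0 ≤ F.eval (z : ℂ) / (z : ℂ) ^ d

lemma eval_reflect_map_conj {N : ℕ} {p : ℂ[X]} (hp : p.natDegree ≤ N) {w : ℂ} (hw : w ≠ 0) :
    (reflect N (p.map (starRingEnd ℂ))).eval w = w ^ N * conj (p.eval (conj w)⁻¹) := by
  let := invertibleOfNonzero (inv_ne_zero hw)
  have h := eval₂_reflect_mul_pow (starRingEnd ℂ) w⁻¹ N p hp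
  rw [invOf_eq_inv, inv_inv] at h
  rw [reflect_map, eval_map, ← map_inv₀, ← eval₂_at_apply, Complex.conj_conj, ← h, mul_comm,
    mul_assoc, ← mul_pow, inv_mul_cancel₀ hw, one_pow, mul_one]

lemma eval_reflect_map_conj_circle {N : ℕ} {p : ℂ[X]} (hp : p.natDegree ≤ N) (z : Circle) :
    (reflect N (p.map (starRingEnd ℂ))).eval (z : ℂ) = (z : ℂ) ^ N * conj (p.eval (z : ℂ)) := by
  rw [eval_reflect_map_conj hp z.coe_ne_zero, ← Circle.coe_inv_eq_conj, Circle.coe_inv, inv_inv]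

namespace NonnegOnCircle

variable {d : ℕ} {F : ℂ[X]}

lemma reflect_map_conj_eq (h : NonnegOnCircle d F) (hdeg : F.natDegree ≤ 2 * d) :
    reflect (2 * d) (F.map (starRingEnd ℂ)) = F := by
  refine eq_of_eval_eq_on_circle fun z => ?_
  set w := F.eval (z : ℂ) / (z : ℂ) ^ d with hw
  have hreal : conj w = w := Complex.conj_eq_iff_im.2 (Complex.nonneg_iff.1 (h z)).2.symm
  have hF : F.eval (z : ℂ) = w * (z : ℂ) ^ d := by
    rw [hw, div_mul_cancel₀ _ (pow_ne_zero _ z.coe_ne_zero)]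
  rw [eval_reflect_map_conj_circle hdeg, hF, map_mul, hreal, map_pow, ← Circle.coe_inv_eq_conj,
    Circle.coe_inv, two_mul, pow_add, inv_pow]
  field_simp [z.coe_ne_zero]

lemma coeff_eq_conj (h : NonnegOnCircle d F) (hdeg : F.natDegree ≤ 2 * d) {k : ℕ}
    (hk : k ≤ 2 * d) : F.coeff k = conj (F.coeff (2 * d - k)) := by
  conv_lhs => rw [← h.reflect_map_conj_eq hdeg]
  rw [coeff_reflect, revAt_le hk, coeff_map]

lemma isRoot_inv_conj (h : NonnegOnCircle d F) (hdeg : F.natDegree ≤ 2 * d) {ρ : ℂ}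
    (hρ : F.IsRoot ρ) : F.IsRoot (conj ρ)⁻¹ := by
  rcases eq_or_ne ρ 0 with rfl | hρ0
  · simpa using hρ
  rw [IsRoot, ← h.reflect_map_conj_eq hdeg, eval_reflect_map_conj hdeg (by simpa using hρ0),
    map_inv₀, Complex.conj_conj, inv_inv, hρ.eq_zero, map_zero, mul_zero]

lemma sq_dvd_of_isRoot (h : NonnegOnCircle d F) {z : Circle} (hz : F.IsRoot z) :
    (X - C (z : ℂ)) ^ 2 ∣ F := by
  rcases eq_or_ne F 0 with rfl | hF
  · exact dvd_zero _
  have hderiv : F.derivative.IsRoot z := by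
    set θ₀ := Complex.arg z
    have hθ₀ : Complex.exp (θ₀ * Complex.I) = z := congrArg Subtype.val (Circle.exp_arg z)
    have hexp : HasDerivAt (fun θ : ℝ => Complex.exp (θ * Complex.I)) (z * Complex.I) θ₀ := by
      simpa [hθ₀] using ((hasDerivAt_id θ₀).ofReal_comp.mul_const Complex.I).cexp
    have hg := ((F.hasDerivAt _).comp θ₀ hexp).div (hexp.pow d) (by simp)
    have := hg.eq_zero_of_nonneg_of_eq_zero (fun θ => h (Circle.exp θ))
      (by simp [hθ₀, hz.eq_zero])
    simpa [hθ₀, hz.eq_zero, Complex.I_ne_zero] using this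
  rw [← le_rootMultiplicity_iff hF]
  exact (one_lt_rootMultiplicity_iff_isRoot hF).2 ⟨hz, hderiv⟩

lemma mul_dvd_of_isRoot (h : NonnegOnCircle d F) (hdeg : F.natDegree ≤ 2 * d) {ρ : ℂ}
    (hρ : F.IsRoot ρ) (hρ0 : ρ ≠ 0) : (X - C ρ) * (X - C (conj ρ)⁻¹) ∣ F := by
  by_cases hρσ : ρ = (conj ρ)⁻¹
  · have hnorm : ‖ρ‖ = 1 := by
      have h1 : (‖ρ‖ : ℂ) ^ 2 = 1 := by
        rw [← Complex.mul_conj']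
        nth_rewrite 1 [hρσ]
        exact inv_mul_cancel₀ (by simpa using hρ0)
      exact (pow_eq_one_iff_of_nonneg (norm_nonneg ρ) two_ne_zero).1 (by exact_mod_cast h1)
    rw [← hρσ, ← sq]
    exact h.sq_dvd_of_isRoot (z := ⟨ρ, mem_sphere_zero_iff_norm.2 hnorm⟩) hρ
  · exact (isCoprime_X_sub_C_of_isUnit_sub (sub_ne_zero.2 hρσ).isUnit).mul_dvd
      (dvd_iff_isRoot.2 hρ) (dvd_iff_isRoot.2 (h.isRoot_inv_conj hdeg hρ))

lemma natDegree_pos (h : NonnegOnCircle (d + 1) F) (hdeg : F.natDegree ≤ 2 * (d + 1))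
    (hF : F ≠ 0) : 0 < F.natDegree := by
  by_contra! h0
  have htop := h.coeff_eq_conj hdeg le_rfl
  rw [Nat.sub_self, coeff_eq_zero_of_natDegree_lt (by omega)] at htop
  have hcoeff : F.coeff 0 = 0 := by simpa using htop.symm
  exact hF (by rw [eq_C_of_natDegree_le_zero h0, hcoeff, map_zero])

lemma exists_factor (h : NonnegOnCircle (d + 1) F) (hdeg : F.natDegree ≤ 2 * (d + 1))
    (hF : F ≠ 0) : ∃ (ρ : ℂ) (H : ℂ[X]), H.natDegree ≤ 2 * d ∧ ∀ z : Circle,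
      F.eval (z : ℂ) / (z : ℂ) ^ (d + 1) = ‖(z : ℂ) - ρ‖ ^ 2 * (H.eval (z : ℂ) / (z : ℂ) ^ d) := by
  obtain ⟨ρ, hρ⟩ := Complex.exists_root (natDegree_pos_iff_degree_pos.1 (h.natDegree_pos hdeg hF))
  rcases eq_or_ne ρ 0 with rfl | hρ0
  · have htop := h.coeff_eq_conj hdeg le_rfl
    obtain ⟨H, rfl⟩ := (X_dvd_iff (f := F)).2 (by rwa [coeff_zero_eq_eval_zero])
    have hH : H ≠ 0 := by rintro rfl; simp at hF
    refine ⟨0, H, ?_, fun z => ?_⟩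
    · rw [natDegree_X_mul hH] at hdeg
      have hlead : H.coeff (2 * d + 1) = 0 := by
        simpa [show 2 * (d + 1) = 2 * d + 1 + 1 by ring, coeff_X_mul] using htop
      have : H.natDegree ≠ 2 * d + 1 := fun he =>
        hH (leadingCoeff_eq_zero.1 (by rwa [leadingCoeff, he]))
      omega
    · simp only [eval_mul, eval_X, pow_succ, sub_zero, Circle.norm_coe, Complex.ofReal_one,
        one_pow, one_mul]
      field_simp
  · obtain ⟨K, rfl⟩ := h.mul_dvd_of_isRoot hdeg hρ hρ0
    have hK : K ≠ 0 := by rintro rfl; simp at hF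
    refine ⟨ρ, C (-(conj ρ)⁻¹) * K, ?_, fun z => ?_⟩
    · rw [natDegree_mul (mul_ne_zero (X_sub_C_ne_zero _) (X_sub_C_ne_zero _)) hK,
        natDegree_mul (X_sub_C_ne_zero _) (X_sub_C_ne_zero _), natDegree_X_sub_C,
        natDegree_X_sub_C] at hdeg
      exact (natDegree_C_mul_le _ _).trans (by omega)
    · simp only [eval_mul, eval_sub, eval_X, eval_C]
      rw [Circle.sub_mul_sub_inv_conj z hρ0]
      field_simp [z.coe_ne_zero]
      ring

lemma of_forall_ne {ρ : ℂ} (h : ∀ z : Circle, (z : ℂ) ≠ ρ → 0 ≤ F.eval (z : ℂ) / (z : ℂ) ^ d) :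
    NonnegOnCircle d F := by
  have hcont : Continuous fun θ : ℝ => F.eval (Circle.exp θ : ℂ) / (Circle.exp θ : ℂ) ^ d :=
    (F.continuous.comp (by fun_prop)).div (by fun_prop) fun θ => pow_ne_zero d (by simp)
  have hclosed := isClosed_le (continuous_const (y := (0 : ℂ))) hcont
  intro z
  rw [← Circle.exp_arg z]
  exact hclosed.closure_subset_iff.2 (fun θ hθ => h _ hθ) (Circle.dense_setOf_coe_exp_ne ρ _)

theorem exists_eq_sq_norm (h : NonnegOnCircle d F) (hdeg : F.natDegree ≤ 2 * d) :
    ∃ r : ℂ[X], r.natDegree ≤ d ∧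
      ∀ z : Circle, F.eval (z : ℂ) / (z : ℂ) ^ d = (‖r.eval (z : ℂ)‖ : ℂ) ^ 2 := by
  induction d generalizing F with
  | zero =>
    obtain ⟨c, rfl⟩ : ∃ c, F = C c := ⟨_, eq_C_of_natDegree_le_zero (by simpa using hdeg)⟩
    have hc : 0 ≤ c := by simpa using h 1
    refine ⟨C (Real.sqrt c.re : ℂ), by simp, fun z => ?_⟩
    rw [eval_C, eval_C, pow_zero, div_one, Complex.norm_real,
      Real.norm_of_nonneg (Real.sqrt_nonneg _), ← Complex.ofReal_pow,
      Real.sq_sqrt (Complex.nonneg_iff.1 hc).1]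
    exact Complex.eq_re_of_ofReal_le (r := 0) (by simpa using hc)
  | succ d ih =>
    rcases eq_or_ne F 0 with rfl | hF
    · exact ⟨0, by simp, by simp⟩
    obtain ⟨ρ, H, hHdeg, hFH⟩ := exists_factor h hdeg hF
    have hH : NonnegOnCircle d H := of_forall_ne (ρ := ρ) fun z hz => by
      have hnorm : (‖(z : ℂ) - ρ‖ : ℂ) ≠ 0 := by
        exact_mod_cast (norm_pos_iff.2 (sub_ne_zero.2 hz)).ne'
      have := mul_nonneg (Complex.zero_le_real.2 (inv_nonneg.2 (sq_nonneg ‖(z : ℂ) - ρ‖)))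
        (hFH z ▸ h z)
      convert this using 1
      push_cast
      field_simp
    obtain ⟨r, hrdeg, hr⟩ := ih hH hHdeg
    refine ⟨(X - C ρ) * r, natDegree_mul_le.trans (by rw [natDegree_X_sub_C]; omega),
      fun z => ?_⟩
    rw [hFH z, hr z, eval_mul, norm_mul]
    simp only [eval_sub, eval_X, eval_C]
    push_cast
    ring

end NonnegOnCircle

theorem exists_sum_sq_norm_eq_sq_norm {ι : Type*} [Fintype ι] {n : ℕ} (u : ι → ℂ[X])
    (hu : ∀ i, u i ∈ degreeLT ℂ n) : ∃ r ∈ degreeLT ℂ n, ∀ z : Circle,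
      ∑ i, (‖(u i).eval (z : ℂ)‖ : ℂ) ^ 2 = (‖r.eval (z : ℂ)‖ : ℂ) ^ 2 := by
  cases n with
  | zero =>
    have hu0 : ∀ i, u i = 0 := fun i => by simpa using mem_degreeLT.1 (hu i)
    exact ⟨0, zero_mem _, fun z => by simp [hu0]⟩
  | succ d =>
    have hdeg : ∀ i, (u i).natDegree ≤ d := fun i => natDegree_le_iff_degree_le.2
      (mem_degreeLE.1 (by rw [← degreeLT_succ_eq_degreeLE]; exact hu i))
    set F := ∑ i, u i * reflect d ((u i).map (starRingEnd ℂ))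
    have hF : ∀ z : Circle,
        F.eval (z : ℂ) / (z : ℂ) ^ d = ∑ i, (‖(u i).eval (z : ℂ)‖ : ℂ) ^ 2 := by
      intro z
      simp only [F, eval_finsetSum, eval_mul, Finset.sum_div, ← Complex.mul_conj']
      refine Finset.sum_congr rfl fun i _ => ?_
      rw [eval_reflect_map_conj_circle (hdeg i)]
      field_simp [z.coe_ne_zero]
    have hFdeg : F.natDegree ≤ 2 * d := natDegree_sum_le_of_forall_le _ _ fun i _ =>
      natDegree_mul_le.trans (by
        have := natDegree_reflect_le (N := d) (p := (u i).map (starRingEnd ℂ))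
        have := natDegree_map_le (f := starRingEnd ℂ) (p := u i)
        have := hdeg i
        omega)
    obtain ⟨r, hr, hFr⟩ := NonnegOnCircle.exists_eq_sq_norm
      (fun z => hF z ▸ Finset.sum_nonneg fun i _ => by positivity) hFdeg
    refine ⟨r, ?_, fun z => (hF z).symm.trans (hFr z)⟩
    rw [degreeLT_succ_eq_degreeLE, mem_degreeLE, ← natDegree_le_iff_degree_le]
    exact hr

end Polynomial

namespace Matrix

section CommRing

variable {R : Type*} [CommRing R] {n : ℕ} (A : Matrix (Fin n) (Fin n) R) (b : Fin n → R)

noncomputable def resolventNumerator : Fin n → R[X] :=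
  (1 - (X : R[X]) • A.map C).adjugate *ᵥ fun i => C (b i)

lemma map_eval_one_sub_X_smul (z : R) :
    (1 - (X : R[X]) • A.map C).map (eval z) = 1 - z • A := by
  ext i j
  rw [Matrix.map_apply, sub_apply, sub_apply, smul_apply, smul_apply, Matrix.map_apply, one_apply,
    one_apply]
  split_ifs <;> simp [mul_comm _ z]

lemma eval_charpolyRev_eq_det (z : R) : A.charpolyRev.eval z = (1 - z • A).det := by
  rw [charpolyRev, ← coe_evalRingHom, RingHom.map_det, RingHom.mapMatrix_apply]
  exact congrArg det (map_eval_one_sub_X_smul A z)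

lemma eval_resolventNumerator (z : R) (i : Fin n) :
    (resolventNumerator A b i).eval z = ((1 - z • A).adjugate *ᵥ b) i := by
  rw [resolventNumerator, ← coe_evalRingHom, RingHom.map_mulVec, ← RingHom.mapMatrix_apply,
    RingHom.map_adjugate, RingHom.mapMatrix_apply]
  simp [Function.comp_def, map_eval_one_sub_X_smul]

lemma charpolyRev_ne_zero [Nontrivial R] : A.charpolyRev ≠ 0 := fun h => by
  simpa [h] using eval_charpolyRev (M := A)

lemma resolventNumerator_mem_degreeLT (i : Fin n) : resolventNumerator A b i ∈ degreeLT R n := by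
  cases n with
  | zero => exact i.elim0
  | succ m =>
    have hadj : ∀ j, ((1 - (X : R[X]) • A.map C).adjugate i j).natDegree ≤ m := fun j => by
      rw [adjugate_fin_succ_eq_det_submatrix]
      have hsub : (1 - (X : R[X]) • A.map C).submatrix j.succAbove i.succAbove =
          (X : R[X]) • (-A.submatrix j.succAbove i.succAbove).map C +
            ((1 : Matrix (Fin (m + 1)) (Fin (m + 1)) R).submatrix j.succAbove i.succAbove).map C := by
        ext k l : 1
        simp only [submatrix_apply, sub_apply, one_apply, smul_apply, map_apply, smul_eq_mul,
          X_mul_C, add_apply, neg_apply, map_neg, mul_neg, apply_ite C, map_one, map_zero]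
        ring
      have hsign : ((-1 : R[X]) ^ ((j : ℕ) + i)).natDegree = 0 := by
        rw [← C_1, ← C_neg, ← C_pow, natDegree_C]
      refine natDegree_mul_le.trans ?_
      rw [hsign, zero_add, hsub]
      simpa using natDegree_det_X_add_C_le (-A.submatrix j.succAbove i.succAbove)
        ((1 : Matrix (Fin (m + 1)) (Fin (m + 1)) R).submatrix j.succAbove i.succAbove)
    rw [degreeLT_succ_eq_degreeLE, resolventNumerator, mulVec, dotProduct]
    exact Submodule.sum_mem _ fun j _ => mem_degreeLE.2 (natDegree_le_iff_degree_le.1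
      ((natDegree_mul_C_le _ _).trans (hadj j)))

end CommRing

variable {K : Type*} [Field K] {n : ℕ} (A : Matrix (Fin n) (Fin n) K) (b : Fin n → K)

/-- When `1 - z • A` is singular both sides vanish, by the conventions `M⁻¹ = 0` and `0⁻¹ = 0`. -/
lemma one_sub_smul_inv_mulVec (z : K) : (1 - z • A)⁻¹ *ᵥ b =
    (A.charpolyRev.eval z)⁻¹ • fun i => (resolventNumerator A b i).eval z := by
  ext i
  rw [inv_def, Ring.inverse_eq_inv', smul_mulVec, eval_charpolyRev_eq_det, Pi.smul_apply,
    Pi.smul_apply, eval_resolventNumerator]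

lemma X_pow_dvd_resolventNumerator_sub (m : ℕ) (i : Fin n) :
    X ^ m ∣ resolventNumerator A b i -
      A.charpolyRev * ∑ l ∈ Finset.range m, C ((A ^ l *ᵥ b) i) * X ^ l := by
  set M := 1 - (X : K[X]) • A.map C
  set f := A.charpolyRev
  set w : ℕ → Fin n → K[X] := fun l => (C : K →+* K[X]) ∘ (A ^ l *ᵥ b)
  have hw : ∀ l, A.map C *ᵥ w l = w (l + 1) := fun l => funext fun j =>
    (RingHom.map_mulVec C A _ j).symm.trans (by rw [mulVec_mulVec, ← pow_succ']; rfl)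
  have hMs : ∀ m, M *ᵥ ∑ l ∈ Finset.range m, (X : K[X]) ^ l • w l = w 0 - (X : K[X]) ^ m • w m := by
    intro m
    induction m with
    | zero => simp
    | succ m ih =>
      rw [Finset.sum_range_succ, mulVec_add, ih, mulVec_smul, sub_mulVec, one_mulVec,
        smul_mulVec, hw, smul_sub, smul_smul, ← pow_succ]
      abel
  have hMq : M *ᵥ resolventNumerator A b = f • w 0 := by
    rw [resolventNumerator, mulVec_mulVec, mul_adjugate, smul_mulVec, one_mulVec]
    simp only [w, pow_zero, one_mulVec]
    rfl
  set s := ∑ l ∈ Finset.range m, (X : K[X]) ^ l • w l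
  have key : resolventNumerator A b - f • s = (X : K[X]) ^ m • (M.adjugate *ᵥ w m) := by
    refine smul_right_injective (Fin n → K[X]) (charpolyRev_ne_zero A) ?_
    calc f • (resolventNumerator A b - f • s)
        = M.adjugate *ᵥ (M *ᵥ (resolventNumerator A b - f • s)) := by
          rw [mulVec_mulVec, adjugate_mul, smul_mulVec, one_mulVec]
          rfl
      _ = M.adjugate *ᵥ (f • (X : K[X]) ^ m • w m) := by
          rw [mulVec_sub, hMq, mulVec_smul, hMs, smul_sub, sub_sub_cancel]
      _ = f • (X : K[X]) ^ m • (M.adjugate *ᵥ w m) := by rw [mulVec_smul, mulVec_smul]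
  refine ⟨(M.adjugate *ᵥ w m) i, ?_⟩
  have hs : s i = ∑ l ∈ Finset.range m, C ((A ^ l *ᵥ b) i) * X ^ l := by
    rw [show s i = _ from Finset.sum_apply i _ _]
    exact Finset.sum_congr rfl fun l _ => mul_comm _ _
  simpa only [Pi.sub_apply, Pi.smul_apply, smul_eq_mul, hs] using congrFun key i

lemma mul_one_sub_smul_inv_mul_apply {m : Type*} (N : Matrix m (Fin n) K)
    (B : Matrix (Fin n) (Fin 1) K) (z : K) (i : m) : (N * ((1 - z • A)⁻¹ * B)) i 0 =
      (A.charpolyRev.eval z)⁻¹ * (∑ j, N i j • resolventNumerator A (fun k => B k 0) j).eval z := by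
  rw [mul_apply, eval_finsetSum, Finset.mul_sum]
  refine Finset.sum_congr rfl fun j _ => ?_
  rw [eval_smul, smul_eq_mul, mul_left_comm]
  exact congrArg (N i j * ·) (congrFun (one_sub_smul_inv_mulVec A _ z) j)

lemma linearIndependent_resolventNumerator
    (hreach : IsUnit (of fun i (j : Fin n) => (A ^ (j : ℕ) *ᵥ b) i)) :
    LinearIndependent K (resolventNumerator A b) := by
  refine Fintype.linearIndependent_iff.2 fun g hg => ?_
  set P : K[X] := ∑ l : Fin n, C (g ⬝ᵥ (A ^ (l : ℕ) *ᵥ b)) * X ^ (l : ℕ)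
  have hfP : X ^ n ∣ A.charpolyRev * P := by
    have := Finset.dvd_sum fun j (_ : j ∈ Finset.univ) =>
      (X_pow_dvd_resolventNumerator_sub A b n j).mul_left (C (g j))
    rw [← dvd_neg]
    convert this using 1
    simp only [mul_sub, Finset.sum_sub_distrib, ← smul_eq_C_mul, hg, zero_sub, P, dotProduct]
    simp only [Finset.sum_range, Finset.mul_sum, Finset.smul_sum, Finset.sum_smul, smul_smul,
      mul_smul_comm, neg_inj]
    exact Finset.sum_comm
  have hX : ¬ X ∣ A.charpolyRev := by simp [X_dvd_iff, coeff_zero_eq_eval_zero]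
  have hP : P = 0 := eq_zero_of_dvd_of_degree_lt (prime_X.pow_dvd_of_dvd_mul_left n hX hfP)
    (by rw [degree_X_pow]; exact degree_sum_fin_lt _)
  have hΓ : g ᵥ* (of fun i (j : Fin n) => (A ^ (j : ℕ) *ᵥ b) i) = 0 := by
    ext l
    simpa [P, finsetSum_coeff, coeff_C_mul_X_pow, Fin.val_inj, vecMul] using
      congrArg (coeff · l) hP
  exact congrFun (vecMul_injective_of_isUnit hreach (hΓ.trans (zero_vecMul _).symm))

lemma span_resolventNumerator (hreach : IsUnit (of fun i (j : Fin n) => (A ^ (j : ℕ) *ᵥ b) i)) :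
    Submodule.span K (Set.range (resolventNumerator A b)) = degreeLT K n := by
  have : FiniteDimensional K (degreeLT K n) := (degreeLTEquiv K n).symm.finiteDimensional
  refine Submodule.eq_of_le_of_finrank_eq
    (Submodule.span_le.2 (Set.range_subset_iff.2 (resolventNumerator_mem_degreeLT A b))) ?_
  rw [finrank_span_eq_card (linearIndependent_resolventNumerator A b hreach), Fintype.card_fin,
    (degreeLTEquiv K n).finrank_eq, Module.finrank_fin_fun]

lemma PosSemidef.exists_eq_conjTranspose_mul_self {m 𝕜 : Type*} [Fintype m] [RCLike 𝕜]
    {Ξ : Matrix m m 𝕜} (hΞ : Ξ.PosSemidef) : ∃ M : Matrix m m 𝕜, Ξ = Mᴴ * M := by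
  classical
  open scoped MatrixOrder Matrix.Norms.L2Operator in
  exact CStarAlgebra.nonneg_iff_eq_star_mul_self.mp hΞ.nonneg

end Matrix

theorem spectral_factorization_GXiG_general
    {n : ℕ}
    (A : Matrix (Fin n) (Fin n) ℂ) (B : Matrix (Fin n) (Fin 1) ℂ)
    (hreach : IsUnit (Matrix.of fun (i : Fin n) (j : Fin n) => (A ^ (j : ℕ) * B) i 0))
    (Ξ : Matrix (Fin n) (Fin n) ℂ)
    (hΞ : Ξ.PosSemidef) :
    ∃ ξ : Matrix (Fin 1) (Fin n) ℂ, ∀ θ ∈ Set.Icc (0:ℝ) (2 * Real.pi),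
      ((((1 - Complex.exp (θ * Complex.I) • A)⁻¹ * B)ᴴ * Ξ *
          ((1 - Complex.exp (θ * Complex.I) • A)⁻¹ * B) :
          Matrix (Fin 1) (Fin 1) ℂ) 0 0) =
        ((‖(ξ * ((1 - Complex.exp (θ * Complex.I) • A)⁻¹ * B) :
            Matrix (Fin 1) (Fin 1) ℂ) 0 0‖ : ℂ)) ^ 2 := by
  obtain ⟨M, rfl⟩ := hΞ.exists_eq_conjTranspose_mul_self
  set q := A.resolventNumerator fun i => B i 0
  have hspan := A.span_resolventNumerator (fun i => B i 0) hreach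
  obtain ⟨r, hr, hsq⟩ := exists_sum_sq_norm_eq_sq_norm (fun i => ∑ j, M i j • q j)
    fun i => hspan ▸ Submodule.sum_mem _ fun j _ =>
      Submodule.smul_mem _ _ (Submodule.subset_span (Set.mem_range_self j))
  obtain ⟨ξ, rfl⟩ := (Submodule.mem_span_range_iff_exists_fun ℂ).1 (hspan ▸ hr)
  refine ⟨of fun _ j => ξ j, fun θ _ => ?_⟩
  set G := (1 - Complex.exp (θ * Complex.I) • A)⁻¹ * B
  rw [show Gᴴ * (Mᴴ * M) * G = (M * G)ᴴ * (M * G) by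
    simp only [conjTranspose_mul, Matrix.mul_assoc], mul_apply]
  simp only [G, conjTranspose_apply, mul_one_sub_smul_inv_mul_apply, RCLike.star_def,
    Complex.conj_mul', of_apply, norm_mul, Complex.ofReal_mul, mul_pow, ← Finset.mul_sum]
  exact congrArg _ (hsq (Circle.exp θ))

/-- With `(A,B)` reachable and `Ξ` Hermitian positive semidefinite, there
is a row vector `ξ` such that on the unit circle the nonnegative scalar `G* Ξ G`
factors as `|ξ G|²`, where `G(z) = (I − zA)⁻¹ B`. -/
theorem spectral_factorization_GXiG
    {n : ℕ} (hn : 1 ≤ n)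
    (A : Matrix (Fin n) (Fin n) ℂ) (B : Matrix (Fin n) (Fin 1) ℂ)
    (hA : ∀ μ ∈ spectrum ℂ A, ‖μ‖ < 1)
    (hreach : IsUnit (Matrix.of fun (i : Fin n) (j : Fin n) => (A ^ (j : ℕ) * B) i 0))
    (Ξ : Matrix (Fin n) (Fin n) ℂ)
    (hΞ : Ξ.PosSemidef) :
    ∃ ξ : Matrix (Fin 1) (Fin n) ℂ, ∀ θ ∈ Set.Icc (0:ℝ) (2 * Real.pi),
      ((((1 - Complex.exp (θ * Complex.I) • A)⁻¹ * B)ᴴ * Ξ *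
          ((1 - Complex.exp (θ * Complex.I) • A)⁻¹ * B) :
          Matrix (Fin 1) (Fin 1) ℂ) 0 0) =
        ((‖(ξ * ((1 - Complex.exp (θ * Complex.I) • A)⁻¹ * B) :
            Matrix (Fin 1) (Fin 1) ℂ) 0 0‖ : ℂ)) ^ 2 :=
  spectral_factorization_GXiG_general A B hreach Ξ hΞ
end

section
/- Let A be an n×n complex matrix, B an n×1 complex matrix, and σ, ξ 1×n complex row vectors with ξB ≠ 0. Set β = I − B ξ / (ξ B). Let z ∈ ℂ be such that I − zA and I − zAβ are invertible and ξ (I − zA)⁻¹ B ≠ 0. Then (σ (I − zA)⁻¹ B) / (ξ (I − zA)⁻¹ B) = (z · σβ (I − zAβ)⁻¹ A B + σ B) / (ξ B); that is, W = σG/ξG admits the state-space realization with dynamics matrix Aβ, input matrix AB, output matrix σβ, and direct term σB, scaled by (ξB)⁻¹. -/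
open Matrix

lemma one_by_one_eq (P : Matrix (Fin 1) (Fin 1) ℂ) :
    P = P 0 0 • (1 : Matrix (Fin 1) (Fin 1) ℂ) := by
  ext i j
  fin_cases i
  fin_cases j
  simp

/-- With `β = I − Bξ/(ξB)`, for `z` such that `I − zA` and `I − zAβ` are
invertible and `ξ(I − zA)⁻¹B ≠ 0`, one has
`(σ(I − zA)⁻¹B)/(ξ(I − zA)⁻¹B) = (z·σβ(I − zAβ)⁻¹AB + σB)/(ξB)`;
i.e. `W = σG/ξG` admits the state-space realization `(Aβ, AB, σβ, σB)` scaled by `(ξB)⁻¹`. -/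
theorem W_state_space_realization
    {n : ℕ} (hn : 1 ≤ n)
    (A : Matrix (Fin n) (Fin n) ℂ) (B : Matrix (Fin n) (Fin 1) ℂ)
    (σ ξ : Matrix (Fin 1) (Fin n) ℂ)
    (hξB : ((ξ * B : Matrix (Fin 1) (Fin 1) ℂ) 0 0) ≠ 0)
    (β : Matrix (Fin n) (Fin n) ℂ)
    (hβ : β = 1 - (((ξ * B : Matrix (Fin 1) (Fin 1) ℂ) 0 0)⁻¹) • (B * ξ))
    (z : ℂ)
    (hz1 : IsUnit (1 - z • A))
    (hz2 : IsUnit (1 - z • (A * β)))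
    (hden : ((ξ * ((1 - z • A)⁻¹ * B) : Matrix (Fin 1) (Fin 1) ℂ) 0 0) ≠ 0) :
    ((σ * ((1 - z • A)⁻¹ * B) : Matrix (Fin 1) (Fin 1) ℂ) 0 0) /
        ((ξ * ((1 - z • A)⁻¹ * B) : Matrix (Fin 1) (Fin 1) ℂ) 0 0) =
      (z * ((σ * β * (1 - z • (A * β))⁻¹ * (A * B) : Matrix (Fin 1) (Fin 1) ℂ) 0 0) +
          ((σ * B : Matrix (Fin 1) (Fin 1) ℂ) 0 0)) /
        ((ξ * B : Matrix (Fin 1) (Fin 1) ℂ) 0 0) := by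
  set c : ℂ := ((ξ * B : Matrix (Fin 1) (Fin 1) ℂ) 0 0) with hc
  set M : Matrix (Fin n) (Fin n) ℂ := 1 - z • A with hM
  set N : Matrix (Fin n) (Fin n) ℂ := 1 - z • (A * β) with hN
  set G : Matrix (Fin n) (Fin 1) ℂ := M⁻¹ * B with hG
  set d : ℂ := ((ξ * G : Matrix (Fin 1) (Fin 1) ℂ) 0 0) with hd
  have hMdet : IsUnit M.det := (Matrix.isUnit_iff_isUnit_det M).mp hz1
  have hNdet : IsUnit N.det := (Matrix.isUnit_iff_isUnit_det N).mp hz2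
  have hMM : M * M⁻¹ = 1 := Matrix.mul_nonsing_inv _ hMdet
  have hNN : N⁻¹ * N = 1 := Matrix.nonsing_inv_mul _ hNdet
  -- βB = 0
  have hBξB : B * (ξ * B) = c • B := by
    rw [one_by_one_eq (ξ * B), ← hc, Matrix.mul_smul, Matrix.mul_one]
  have hβB : β * B = 0 := by
    rw [hβ, Matrix.sub_mul, Matrix.one_mul, Matrix.smul_mul, Matrix.mul_assoc, hBξB,
      smul_smul, inv_mul_cancel₀ hξB, one_smul, sub_self]
  -- β G
  have hBξG : B * (ξ * G) = d • B := by
    rw [one_by_one_eq (ξ * G), ← hd, Matrix.mul_smul, Matrix.mul_one]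
  have hβG : β * G = G - (c⁻¹ * d) • B := by
    rw [hβ, Matrix.sub_mul, Matrix.one_mul, Matrix.smul_mul, Matrix.mul_assoc, hBξG, smul_smul]
  -- M G = B
  have hMG : M * G = B := by rw [hG, ← Matrix.mul_assoc, hMM, Matrix.one_mul]
  have hMG' : G - z • (A * G) = B := by
    rw [← hMG, hM, Matrix.sub_mul, Matrix.one_mul, Matrix.smul_mul]
  -- N G = B + (z * (c⁻¹ * d)) • (A * B)
  have hNG : N * G = B + (z * (c⁻¹ * d)) • (A * B) := by
    have h1 : N * G = G - z • (A * (β * G)) := by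
      rw [hN, Matrix.sub_mul, Matrix.one_mul, Matrix.smul_mul, Matrix.mul_assoc]
    rw [h1, hβG, Matrix.mul_sub, Matrix.mul_smul, smul_sub, smul_smul, ← hMG']
    abel
  -- N⁻¹ B = B
  have hNB : N * B = B := by
    rw [hN, Matrix.sub_mul, Matrix.one_mul, Matrix.smul_mul, Matrix.mul_assoc, hβB,
      Matrix.mul_zero, smul_zero, sub_zero]
  have hNiB : N⁻¹ * B = B := by
    calc N⁻¹ * B = N⁻¹ * (N * B) := by rw [hNB]
    _ = B := by rw [← Matrix.mul_assoc, hNN, Matrix.one_mul]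
  -- G = B + (z * (c⁻¹ * d)) • (N⁻¹ * (A * B))
  have hG2 : G = B + (z * (c⁻¹ * d)) • (N⁻¹ * (A * B)) := by
    calc G = N⁻¹ * (N * G) := by rw [← Matrix.mul_assoc, hNN, Matrix.one_mul]
    _ = N⁻¹ * B + (z * (c⁻¹ * d)) • (N⁻¹ * (A * B)) := by
        rw [hNG, Matrix.mul_add, Matrix.mul_smul]
    _ = B + (z * (c⁻¹ * d)) • (N⁻¹ * (A * B)) := by rw [hNiB]
  -- multiply by σβ on the left
  have key : σ * (β * G) = (z * (c⁻¹ * d)) • (σ * β * N⁻¹ * (A * B)) := by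
    rw [← Matrix.mul_assoc, Matrix.mul_assoc (σ * β) N⁻¹, ← Matrix.mul_smul,
      ← Matrix.mul_smul]
    calc σ * β * G = σ * β * (B + (z * (c⁻¹ * d)) • (N⁻¹ * (A * B))) := by rw [← hG2]
    _ = σ * (β * B) + σ * β * ((z * (c⁻¹ * d)) • (N⁻¹ * (A * B))) := by
        rw [Matrix.mul_add, Matrix.mul_assoc]
    _ = σ * β * ((z * (c⁻¹ * d)) • (N⁻¹ * (A * B))) := by
        rw [hβB, Matrix.mul_zero, zero_add]
    _ = σ * β * (N⁻¹ * (z * (c⁻¹ * d)) • (A * B)) := by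
        rw [Matrix.mul_smul, Matrix.mul_smul, Matrix.mul_smul]
  -- take the (0,0) entry
  set s : ℂ := ((σ * G : Matrix (Fin 1) (Fin 1) ℂ) 0 0) with hs
  set b : ℂ := ((σ * B : Matrix (Fin 1) (Fin 1) ℂ) 0 0) with hb
  set e : ℂ := ((σ * β * N⁻¹ * (A * B) : Matrix (Fin 1) (Fin 1) ℂ) 0 0) with he
  have keyscalar : s - (c⁻¹ * d) * b = (z * (c⁻¹ * d)) * e := by
    have h2 := congrArg (fun X : Matrix (Fin 1) (Fin 1) ℂ => X 0 0) key
    simp only [Matrix.smul_apply, smul_eq_mul] at h2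
    rw [hβG, Matrix.mul_sub, Matrix.mul_smul] at h2
    simpa [Matrix.sub_apply, Matrix.smul_apply, smul_eq_mul, ← hs, ← hb, ← he] using h2
  show s / d = (z * e + b) / c
  rw [div_eq_div_iff hden hξB]
  field_simp at keyscalar
  linear_combination keyscalar
end
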